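/- Let n = 2 and α ≥ 1. There exists a deterministic allocation rule x ∈ T_D(σ) with R(ρ,x) ≤ α if and only if there is no α-deterministic conflict pair, i.e., if and only if max(ρ₂(s), ρ₁(s′)) ≥ 1/α for all profiles s ≺ s′. -/

import Mathlib

/-!
A deterministic rule is the indicator of the set `U` of profiles allocated to agent 1. It is
truthful iff `U` is closed under reachability, and has ratio at most `α` iff `ρ₁ ≥ 1/α` on `U`
and `ρ₂ ≥ 1/α` off `U`. Such a `U` must contain every profile with `ρ₂ < 1/α` together with
everything reachable from it; this upward closure works iff no profile with `ρ₂ < 1/α` reaches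
one with `ρ₁ < 1/α`, i.e. iff there is no conflict pair.
-/

namespace Stmt15

variable {k : ℕ}

noncomputable def rho1 (v1 v2 : Fin k × Fin k → ℝ) (s : Fin k × Fin k) : ℝ :=
  v1 s / max (v1 s) (v2 s)

noncomputable def rho2 (v1 v2 : Fin k × Fin k → ℝ) (s : Fin k × Fin k) : ℝ :=
  v2 s / max (v1 s) (v2 s)

/-- One step of the reachability relation. -/
def step (v1 v2 : Fin k × Fin k → ℝ) (p q : Fin k × Fin k) : Prop :=
  (p.2 = q.2 ∧ v1 p < v1 q) ∨ (p.1 = q.1 ∧ v2 q < v2 p)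

/-- Membership in the truthful polytope `T(σ)` (two agents). -/
def InT (v1 v2 x1 x2 : Fin k × Fin k → ℝ) : Prop :=
  (∀ s, 0 ≤ x1 s ∧ x1 s ≤ 1) ∧ (∀ s, 0 ≤ x2 s ∧ x2 s ≤ 1) ∧
  (∀ s, x1 s + x2 s = 1) ∧
  (∀ a b c : Fin k, v1 (a, c) < v1 (b, c) → x1 (a, c) ≤ x1 (b, c)) ∧
  (∀ a c d : Fin k, v2 (a, c) < v2 (a, d) → x2 (a, c) ≤ x2 (a, d))

section ClosedSets

variable {α : Type*} {r : α → α → Prop} {U : Set α}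

lemma mem_of_transGen_of_closed (hU : ∀ p q, r p q → p ∈ U → q ∈ U) {p q : α}
    (hpq : Relation.TransGen r p q) (hp : p ∈ U) : q ∈ U := by
  induction hpq with
  | single hstep => exact hU _ _ hstep hp
  | tail _ hstep ih => exact hU _ _ hstep ih

lemma exists_closed_between_iff {A B : Set α} (hBA : Bᶜ ⊆ A) :
    (∃ U : Set α, (∀ p q, r p q → p ∈ U → q ∈ U) ∧ Bᶜ ⊆ U ∧ U ⊆ A) ↔
      ∀ s s', Relation.TransGen r s s' → s ∈ B ∨ s' ∈ A := by
  constructor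
  · rintro ⟨U, hU, hBU, hUA⟩ s s' hss'
    by_cases hs : s ∈ B
    · exact Or.inl hs
    · exact Or.inr (hUA (mem_of_transGen_of_closed hU hss' (hBU hs)))
  · intro hconflict
    refine ⟨{s | ∃ p ∉ B, Relation.ReflTransGen r p s}, ?_, ?_, ?_⟩
    · rintro p q hpq ⟨b, hb, hbp⟩
      exact ⟨b, hb, hbp.tail hpq⟩
    · intro s hs
      exact ⟨s, hs, Relation.ReflTransGen.refl⟩
    · rintro s ⟨p, hp, hps⟩
      rcases Relation.reflTransGen_iff_eq_or_transGen.mp hps with rfl | hps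
      · exact hBA hp
      · exact (hconflict p s hps).resolve_left hp

end ClosedSets

section TwoAgents

variable {v1 v2 : Fin k × Fin k → ℝ}

lemma rho1_pos (s : Fin k × Fin k) (hs : 0 < v1 s) : 0 < rho1 v1 v2 s :=
  div_pos hs (hs.trans_le (le_max_left _ _))

lemma rho2_pos (s : Fin k × Fin k) (hs : 0 < v2 s) : 0 < rho2 v1 v2 s :=
  div_pos hs (hs.trans_le (le_max_right _ _))

lemma max_rho1_rho2 (s : Fin k × Fin k) (hs : 0 < v1 s) :
    max (rho1 v1 v2 s) (rho2 v1 v2 s) = 1 := by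
  have hmax : 0 < max (v1 s) (v2 s) := hs.trans_le (le_max_left _ _)
  rw [rho1, rho2, max_div_div_right hmax.le, div_self hmax.ne']

lemma InT.le_of_step {x1 x2 : Fin k × Fin k → ℝ} (hx : InT v1 v2 x1 x2)
    {p q : Fin k × Fin k} (hpq : step v1 v2 p q) : x1 p ≤ x1 q := by
  obtain ⟨-, -, hsum, hmono1, hmono2⟩ := hx
  obtain ⟨a, c⟩ := p
  obtain ⟨b, d⟩ := q
  rcases hpq with ⟨rfl, hlt⟩ | ⟨rfl, hlt⟩
  · exact hmono1 a b c hlt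
  · linarith [hmono2 a d c hlt, hsum (a, c), hsum (a, d)]

lemma inT_indicator {U : Set (Fin k × Fin k)}
    (hU : ∀ p q, step v1 v2 p q → p ∈ U → q ∈ U) :
    InT v1 v2 (U.indicator 1) (Uᶜ.indicator 1) := by
  have hbound : ∀ (V : Set (Fin k × Fin k)) s, 0 ≤ V.indicator (1 : Fin k × Fin k → ℝ) s ∧
      V.indicator (1 : Fin k × Fin k → ℝ) s ≤ 1 := fun V s =>
    ⟨Set.indicator_nonneg (fun _ _ => zero_le_one) s,
      Set.indicator_le_self' (fun _ _ => zero_le_one) s⟩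
  have hmono : ∀ p q, step v1 v2 p q →
      U.indicator (1 : Fin k × Fin k → ℝ) p ≤ U.indicator 1 q := by
    intro p q hpq
    by_cases hp : p ∈ U
    · simp [hp, hU p q hpq hp]
    · simp only [Set.indicator_of_notMem hp]
      exact (hbound U q).1
  have hsum : ∀ s, U.indicator (1 : Fin k × Fin k → ℝ) s + Uᶜ.indicator 1 s = 1 := fun s =>
    Set.indicator_self_add_compl_apply U 1 s
  refine ⟨hbound U, hbound Uᶜ, hsum, fun a b c hlt => hmono _ _ (Or.inl ⟨rfl, hlt⟩),
    fun a c d hlt => ?_⟩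
  linarith [hmono _ _ (Or.inr ⟨rfl, hlt⟩ : step v1 v2 (a, d) (a, c)), hsum (a, c), hsum (a, d)]

lemma exists_deterministic_iff_exists_closed [NeZero k] {α : ℝ} (hα : 0 < α)
    (hv1 : ∀ s, 0 < v1 s) (hv2 : ∀ s, 0 < v2 s) :
    (∃ x1 x2 : Fin k × Fin k → ℝ, InT v1 v2 x1 x2 ∧
      (∀ s, x1 s = 0 ∨ x1 s = 1) ∧ (∀ s, x2 s = 0 ∨ x2 s = 1) ∧
      Finset.univ.sup' Finset.univ_nonempty
        (fun s : Fin k × Fin k => x1 s / rho1 v1 v2 s + x2 s / rho2 v1 v2 s) ≤ α) ↔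
    ∃ U : Set (Fin k × Fin k), (∀ p q, step v1 v2 p q → p ∈ U → q ∈ U) ∧
      {s | 1 / α ≤ rho2 v1 v2 s}ᶜ ⊆ U ∧ U ⊆ {s | 1 / α ≤ rho1 v1 v2 s} := by
  have hρ1 : ∀ s, 1 / rho1 v1 v2 s ≤ α ↔ 1 / α ≤ rho1 v1 v2 s := fun s =>
    one_div_le (rho1_pos s (hv1 s)) hα
  have hρ2 : ∀ s, 1 / rho2 v1 v2 s ≤ α ↔ 1 / α ≤ rho2 v1 v2 s := fun s =>
    one_div_le (rho2_pos s (hv2 s)) hα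
  simp only [Finset.sup'_le_iff, Finset.mem_univ, true_implies]
  constructor
  · rintro ⟨x1, x2, hx, hdet, -, hratio⟩
    have hsum := hx.2.2.1
    refine ⟨{s | x1 s = 1}, fun p q hpq (hp : x1 p = 1) => ?_, fun s hs => ?_, fun s hs => ?_⟩
    · have := hx.le_of_step hpq
      rcases hdet q with hq | hq
      · linarith
      · exact hq
    · by_contra hs1
      have hx1 : x1 s = 0 := (hdet s).resolve_right hs1
      have hx2 : x2 s = 1 := by linarith [hsum s]
      exact hs ((hρ2 s).mp (by simpa [hx1, hx2] using hratio s))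
    · have hx2 : x2 s = 0 := by linarith [hsum s, show x1 s = 1 from hs]
      exact (hρ1 s).mp (by simpa [show x1 s = 1 from hs, hx2] using hratio s)
  · rintro ⟨U, hU, hBU, hUA⟩
    refine ⟨U.indicator 1, Uᶜ.indicator 1, inT_indicator hU, ?_, ?_, fun s => ?_⟩
    · intro s; by_cases hs : s ∈ U <;> simp [hs]
    · intro s; by_cases hs : s ∈ U <;> simp [hs]
    · by_cases hs : s ∈ U
      · simpa [hs] using (hρ1 s).mpr (hUA hs)
      · simpa [hs] using (hρ2 s).mpr (not_not.mp fun h => hs (hBU h))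

end TwoAgents

theorem stmt15 (k : ℕ) [NeZero k] (α : ℝ) (hα : 1 ≤ α)
    (v1 v2 : Fin k × Fin k → ℝ)
    (hv1 : ∀ s, 0 < v1 s) (hv2 : ∀ s, 0 < v2 s) :
    (∃ x1 x2 : Fin k × Fin k → ℝ, InT v1 v2 x1 x2 ∧
      (∀ s, x1 s = 0 ∨ x1 s = 1) ∧ (∀ s, x2 s = 0 ∨ x2 s = 1) ∧
      Finset.univ.sup' Finset.univ_nonempty
        (fun s : Fin k × Fin k => x1 s / rho1 v1 v2 s + x2 s / rho2 v1 v2 s) ≤ α) ↔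
    (∀ s s', Relation.TransGen (step v1 v2) s s' →
      1 / α ≤ max (rho2 v1 v2 s) (rho1 v1 v2 s')) := by
  have hα0 : 0 < α := one_pos.trans_le hα
  have hcover : {s | 1 / α ≤ rho2 v1 v2 s}ᶜ ⊆ {s | 1 / α ≤ rho1 v1 v2 s} := by
    intro s hs
    have hle : 1 / α ≤ max (rho1 v1 v2 s) (rho2 v1 v2 s) := by
      rw [max_rho1_rho2 s (hv1 s), div_le_one hα0]
      exact hα
    exact (le_max_iff.mp hle).resolve_right hs
  rw [exists_deterministic_iff_exists_closed hα0 hv1 hv2, exists_closed_between_iff hcover]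
  simp only [Set.mem_ofPred_eq, le_max_iff]

end Stmt15
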